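/- For every integer j with 1 ≤ j ≤ 104, the exponential sum |Σ_{s=1}^{12} e(j·2^s/105)| is at most 6, and this maximum value 6 is attained for some j in that range. -/

import Mathlib

/-!
Put ω = e(j/105). Since 91 ≡ 1, 15 ≡ 0 (mod 15) and 91 ≡ 0, 15 ≡ 1 (mod 7), ω = αβ with α = ω⁹¹ a
15th and β = ω¹⁵ a 7th root of unity. As 2 has order 4 modulo 15 and order 3 modulo 7, the Chinese
remainder theorem factors the sum as (α + α² + α⁴ + α⁸)(β + β² + β⁴). For β ≠ 1 the second factor
has squared modulus 2; for α ≠ 1 the first has squared modulus 3 - γ - γ² ∈ {1, 4}, where γ = α⁵ is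
a cube root of unity. Hence the sum has modulus at most max(4√2, 2 · 3) = 6, with equality for
j = 35, where β = 1 and γ ≠ 1.
-/

open Finset

noncomputable def e (x : ℝ) : ℂ := Complex.exp (2 * Real.pi * Complex.I * x)

open Function ComplexConjugate

theorem Nat.Coprime.sum_range_mul_mul_of_periodic {R : Type*} [CommSemiring R] {a b : ℕ}
    (hab : a.Coprime b) {f g : ℕ → R} (hf : Periodic f a) (hg : Periodic g b) :
    ∑ s ∈ range (a * b), f s * g s = (∑ u ∈ range a, f u) * ∑ v ∈ range b, g v := by
  rcases Nat.eq_zero_or_pos a with rfl | ha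
  · simp
  rcases Nat.eq_zero_or_pos b with rfl | hb
  · simp
  rw [sum_mul_sum, ← sum_product']
  refine sum_nbij' (fun s => (s % a, s % b)) (fun p => Nat.chineseRemainder hab p.1 p.2)
    ?_ ?_ ?_ ?_ ?_
  · intro s _
    simp [Nat.mod_lt _ ha, Nat.mod_lt _ hb]
  · intro p _
    simpa using Nat.chineseRemainder_lt_mul hab p.1 p.2 ha.ne' hb.ne'
  · intro s hs
    have hcr := Nat.chineseRemainder_modEq_unique hab (Nat.mod_modEq s a).symm
      (Nat.mod_modEq s b).symm
    exact hcr.symm.eq_of_lt_of_lt (Nat.chineseRemainder_lt_mul hab _ _ ha.ne' hb.ne')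
      (by simpa using hs)
  · rintro ⟨u, v⟩ huv
    simp only [mem_product, mem_range] at huv
    have h := (Nat.chineseRemainder hab u v).prop
    simp only [Prod.mk.injEq]
    exact ⟨Eq.trans h.1 (Nat.mod_eq_of_lt huv.1), Eq.trans h.2 (Nat.mod_eq_of_lt huv.2)⟩
  · intro s _
    simp only [hf.map_mod_nat, hg.map_mod_nat]

theorem periodic_pow_pow {M : Type*} [Monoid M] {x : M} {m k : ℕ} (h : x ^ m ^ k = x) :
    Periodic (fun s => x ^ m ^ s) k := fun s => by
  simp only [pow_add, mul_comm (m ^ s), pow_mul, h]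

theorem sum_Icc_pow_two_pow_eq_mul {R : Type*} [CommRing R] {α β : R} (hα : α ^ 15 = 1)
    (hβ : β ^ 7 = 1) :
    ∑ s ∈ Icc 1 12, (α * β) ^ 2 ^ s = (α + α ^ 2 + α ^ 4 + α ^ 8) * (β + β ^ 2 + β ^ 4) := by
  have hα' : α ^ 2 ^ 4 = α := by linear_combination α * hα
  have hβ' : β ^ 2 ^ 3 = β := by linear_combination β * hβ
  calc ∑ s ∈ Icc 1 12, (α * β) ^ 2 ^ s
      = ∑ s ∈ range (4 * 3), α ^ 2 ^ (s + 1) * β ^ 2 ^ (s + 1) := by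
        rw [← Ico_add_one_right_eq_Icc, sum_Ico_eq_sum_range]
        simp only [mul_pow, add_comm 1]
        rfl
    _ = (∑ u ∈ range 4, α ^ 2 ^ (u + 1)) * ∑ v ∈ range 3, β ^ 2 ^ (v + 1) :=
        (by norm_num : Nat.Coprime 4 3).sum_range_mul_mul_of_periodic
          ((periodic_pow_pow hα').add_const 1) ((periodic_pow_pow hβ').add_const 1)
    _ = _ := by
        simp only [sum_range_succ, sum_range_zero]
        linear_combination
          (β ^ 2 + β ^ 4 + β ^ 8) * α * hα + (α + α ^ 2 + α ^ 4 + α ^ 8) * β * hβ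

theorem Complex.conj_pow_eq_pow_sub {z : ℂ} {n k : ℕ} (h : z ^ n = 1) (hn : n ≠ 0) (hk : k ≤ n) :
    conj (z ^ k) = z ^ (n - k) := by
  rw [← Complex.inv_eq_conj (by rw [norm_pow, Complex.norm_eq_one_of_pow_eq_one h hn, one_pow])]
  exact inv_eq_of_mul_eq_one_right (by rw [← pow_add, Nat.add_sub_cancel' hk, h])

theorem sq_norm_gaussPeriod_mod_seven {β : ℂ} (h7 : β ^ 7 = 1) (h1 : β ≠ 1) :
    ‖β + β ^ 2 + β ^ 4‖ ^ 2 = 2 := by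
  have hc : ∀ k ≤ 7, conj (β ^ k) = β ^ (7 - k) := fun k =>
    Complex.conj_pow_eq_pow_sub h7 (by norm_num)
  have hconj : conj (β + β ^ 2 + β ^ 4) = β ^ 6 + β ^ 5 + β ^ 3 := by
    rw [map_add, map_add, hc 2 (by norm_num), hc 4 (by norm_num), ← hc 1 (by norm_num), pow_one]
  suffices h : (β + β ^ 2 + β ^ 4) * conj (β + β ^ 2 + β ^ 4) = 2 by
    rw [Complex.mul_conj'] at h; exact_mod_cast h
  rw [hconj]
  refine mul_left_cancel₀ (sub_ne_zero.2 h1) ?_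
  linear_combination (1 + (β - 1) * (3 + β + β ^ 2 + β ^ 3)) * h7

theorem sq_norm_gaussPeriod_mod_fifteen {α : ℂ} (h15 : α ^ 15 = 1) (h1 : α ≠ 1) :
    (‖α + α ^ 2 + α ^ 4 + α ^ 8‖ ^ 2 : ℂ) = 3 - α ^ 5 - α ^ 10 := by
  have hc : ∀ k ≤ 15, conj (α ^ k) = α ^ (15 - k) := fun k =>
    Complex.conj_pow_eq_pow_sub h15 (by norm_num)
  have hconj : conj (α + α ^ 2 + α ^ 4 + α ^ 8) = α ^ 14 + α ^ 13 + α ^ 11 + α ^ 7 := by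
    rw [map_add, map_add, map_add, hc 2 (by norm_num), hc 4 (by norm_num), hc 8 (by norm_num),
      ← hc 1 (by norm_num), pow_one]
  rw [← Complex.mul_conj', hconj]
  refine mul_left_cancel₀ (sub_ne_zero.2 h1) ?_
  -- The differences of {1, 2, 4, 8} hit every residue mod 15 except 0, 5, 10 exactly once.
  linear_combination (1 + (α - 1) * (4 + α + α ^ 2 + α ^ 3 + α ^ 4 + α ^ 6 + α ^ 7)) * h15

theorem norm_gaussPeriod_mod_fifteen_eq_two {α : ℂ} (h15 : α ^ 15 = 1) (h5 : α ^ 5 ≠ 1) :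
    ‖α + α ^ 2 + α ^ 4 + α ^ 8‖ = 2 := by
  have h1 : α ≠ 1 := by rintro rfl; simp at h5
  have hcube : 1 + α ^ 5 + α ^ 10 = 0 := by
    refine mul_left_cancel₀ (sub_ne_zero.2 h5) ?_
    linear_combination h15
  have h := sq_norm_gaussPeriod_mod_fifteen h15 h1
  have h' : (‖α + α ^ 2 + α ^ 4 + α ^ 8‖ ^ 2 : ℂ) = 2 ^ 2 := by
    rw [h]; linear_combination -hcube
  rw [← pow_left_inj₀ (norm_nonneg _) zero_le_two two_ne_zero]
  exact_mod_cast h'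

theorem norm_gaussPeriod_mod_fifteen_le_two {α : ℂ} (h15 : α ^ 15 = 1) (h1 : α ≠ 1) :
    ‖α + α ^ 2 + α ^ 4 + α ^ 8‖ ≤ 2 := by
  by_cases h5 : α ^ 5 = 1
  · have h := sq_norm_gaussPeriod_mod_fifteen h15 h1
    have h' : (‖α + α ^ 2 + α ^ 4 + α ^ 8‖ ^ 2 : ℂ) = 1 := by
      rw [h]; linear_combination (-2 - α ^ 5) * h5
    norm_cast at h'
    nlinarith [norm_nonneg (α + α ^ 2 + α ^ 4 + α ^ 8)]
  · exact (norm_gaussPeriod_mod_fifteen_eq_two h15 h5).le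

theorem norm_sum_Icc_pow_two_pow_le_six {ω : ℂ} (h105 : ω ^ 105 = 1) (h1 : ω ≠ 1) :
    ‖∑ s ∈ Icc 1 12, ω ^ 2 ^ s‖ ≤ 6 := by
  have hω : ω = ω ^ 91 * ω ^ 15 := by linear_combination (-ω) * h105
  have hα : (ω ^ 91) ^ 15 = 1 := by
    rw [← pow_mul, show 91 * 15 = 105 * 13 by norm_num, pow_mul, h105, one_pow]
  have hβ : (ω ^ 15) ^ 7 = 1 := by rw [← pow_mul]; exact h105
  rw [hω, sum_Icc_pow_two_pow_eq_mul hα hβ, norm_mul]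
  by_cases hβ1 : ω ^ 15 = 1
  · have hα1 : ω ^ 91 ≠ 1 := fun h => h1 (by rw [hω, h, hβ1, one_mul])
    rw [hβ1, show ‖(1 : ℂ) + 1 ^ 2 + 1 ^ 4‖ = 3 by norm_num]
    linarith [norm_gaussPeriod_mod_fifteen_le_two hα hα1]
  · have hG : ‖ω ^ 91 + (ω ^ 91) ^ 2 + (ω ^ 91) ^ 4 + (ω ^ 91) ^ 8‖ ≤ 4 := by
      rcases eq_or_ne (ω ^ 91) 1 with hα1 | hα1
      · rw [hα1]; norm_num
      · linarith [norm_gaussPeriod_mod_fifteen_le_two hα hα1]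
    have hH := sq_norm_gaussPeriod_mod_seven hβ hβ1
    nlinarith [norm_nonneg (ω ^ 91 + (ω ^ 91) ^ 2 + (ω ^ 91) ^ 4 + (ω ^ 91) ^ 8),
      norm_nonneg (ω ^ 15 + (ω ^ 15) ^ 2 + (ω ^ 15) ^ 4)]

theorem norm_sum_Icc_pow_two_pow_eq_six {ω : ℂ} (h3 : ω ^ 3 = 1) (h1 : ω ≠ 1) :
    ‖∑ s ∈ Icc 1 12, ω ^ 2 ^ s‖ = 6 := by
  have h15 : ω ^ 15 = 1 := by rw [show 15 = 3 * 5 by rfl, pow_mul, h3, one_pow]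
  have h5 : ω ^ 5 ≠ 1 := fun h5 => h1 (by linear_combination (-ω) * h5 + (ω ^ 3 + 1) * h3)
  rw [← mul_one ω, sum_Icc_pow_two_pow_eq_mul h15 (one_pow 7), norm_mul,
    norm_gaussPeriod_mod_fifteen_eq_two h15 h5]
  norm_num

theorem e_nat_mul (n : ℕ) (x : ℝ) : e (n * x) = e x ^ n := by
  rw [e, e, ← Complex.exp_nat_mul]; congr 1; push_cast; ring

theorem isPrimitiveRoot_e_one_div {n : ℕ} (hn : n ≠ 0) : IsPrimitiveRoot (e (1 / n)) n := by
  convert Complex.isPrimitiveRoot_exp n hn using 1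
  rw [e]; congr 1; push_cast; ring

theorem stmt_3 :
    (∀ j ∈ Finset.Icc (1 : ℕ) 104,
      ‖∑ s ∈ Finset.Icc (1 : ℕ) 12, e ((j : ℝ) * 2 ^ s / 105)‖ ≤ 6) ∧
    (∃ j ∈ Finset.Icc (1 : ℕ) 104,
      ‖∑ s ∈ Finset.Icc (1 : ℕ) 12, e ((j : ℝ) * 2 ^ s / 105)‖ = 6) := by
  have hζ : IsPrimitiveRoot (e (1 / 105)) 105 := by
    exact_mod_cast isPrimitiveRoot_e_one_div (n := 105) (by norm_num)
  have hterm (j s : ℕ) : e ((j : ℝ) * 2 ^ s / 105) = (e (1 / 105) ^ j) ^ 2 ^ s := by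
    rw [← pow_mul, ← e_nat_mul]; congr 1; push_cast; ring
  simp only [hterm]
  refine ⟨fun j hj => ?_, 35, by simp, ?_⟩
  · obtain ⟨hj1, hj2⟩ := mem_Icc.1 hj
    exact norm_sum_Icc_pow_two_pow_le_six (by rw [pow_right_comm, hζ.pow_eq_one, one_pow])
      (hζ.pow_ne_one_of_pos_of_lt (by omega) (by omega))
  · exact norm_sum_Icc_pow_two_pow_eq_six
      (by rw [← pow_mul, hζ.pow_eq_one]) (hζ.pow_ne_one_of_pos_of_lt (by norm_num) (by norm_num))
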